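/- arXiv:2404.05795 — 6 statements merged into one kernel-verified Lean document; each statement's English description precedes it below -/
import Mathlib

section
/- Let N = [[P, Q],[R, S]] be a 2n×2n orthosymplectic matrix (symplectic and orthogonal) with n×n blocks. Then the n×n matrix P∘P + Q∘Q, where ∘ denotes the Hadamard (entrywise) product, is doubly stochastic. -/
open Matrix

theorem orthosymplectic_hadamard_doublyStochastic {n : ℕ}
    (P Q R S : Matrix (Fin n) (Fin n) ℝ)
    (hsymp : (fromBlocks P Q R S)ᵀ *
        (fromBlocks 0 1 (-1) 0 : Matrix (Fin n ⊕ Fin n) (Fin n ⊕ Fin n) ℝ) *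
        fromBlocks P Q R S = fromBlocks 0 1 (-1) 0)
    (horth : (fromBlocks P Q R S)ᵀ * fromBlocks P Q R S = 1) :
    (∀ i j, 0 ≤ P i j * P i j + Q i j * Q i j) ∧
    (∀ i, ∑ j, (P i j * P i j + Q i j * Q i j) = 1) ∧
    (∀ j, ∑ i, (P i j * P i j + Q i j * Q i j) = 1) := by
  set N := fromBlocks P Q R S with hNdef
  have hN' : N * Nᵀ = 1 := mul_eq_one_comm.mp horth
  have hcomm : (fromBlocks 0 1 (-1) 0 : Matrix (Fin n ⊕ Fin n) (Fin n ⊕ Fin n) ℝ) * N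
      = N * fromBlocks 0 1 (-1) 0 := by
    calc (fromBlocks 0 1 (-1) 0 : Matrix (Fin n ⊕ Fin n) (Fin n ⊕ Fin n) ℝ) * N
        = (N * Nᵀ) * fromBlocks 0 1 (-1) 0 * N := by rw [hN', one_mul]
      _ = N * (Nᵀ * fromBlocks 0 1 (-1) 0 * N) := by simp only [mul_assoc]
      _ = N * fromBlocks 0 1 (-1) 0 := by rw [hsymp]
  have hR : R = -Q := by
    have : ∀ i j : Fin n, R i j = -Q i j := by
      intro i j
      have := congrFun (congrFun hcomm (Sum.inl i)) (Sum.inl j)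
      simpa [hNdef, fromBlocks_multiply, Matrix.neg_mul] using this
    ext i j; simp [this i j]
  refine ⟨fun i j => add_nonneg (mul_self_nonneg _) (mul_self_nonneg _), ?_, ?_⟩
  · intro i
    have h := congrFun (congrFun hN' (Sum.inl i)) (Sum.inl i)
    simp only [Matrix.mul_apply, Matrix.one_apply_eq, Fintype.sum_sum_type] at h
    simpa [hNdef, Matrix.transpose_apply, mul_comm, ← Finset.sum_add_distrib] using h
  · intro j
    have h := congrFun (congrFun horth (Sum.inl j)) (Sum.inl j)
    simp only [Matrix.mul_apply, Matrix.one_apply_eq, Fintype.sum_sum_type, hNdef,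
      Matrix.transpose_apply, fromBlocks_apply₁₁, fromBlocks_apply₂₁, hR] at h
    simpa [mul_comm, neg_mul_neg, ← Finset.sum_add_distrib] using h
end

section
/- Let x, y be vectors in R^n. If there exists an n×n doubly stochastic matrix E such that x = E y, then x is majorized by y, i.e., for each k = 1,…,n the sum of the k smallest entries of x is at least the sum of the k smallest entries of y, with equality when k = n. -/
open Matrix Finset

/-- Sum of the `k` smallest entries of a vector `x : Fin n → ℝ`. -/
noncomputable def kSmallestSum {n : ℕ} (x : Fin n → ℝ) (k : ℕ) : ℝ :=
  ∑ i ∈ Finset.univ.filter (fun i : Fin n => (i : ℕ) < k), x (Tuple.sort x i)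

lemma card_filter_lt_fin {n k : ℕ} (hk : k ≤ n) :
    (Finset.univ.filter (fun i : Fin n => (i : ℕ) < k)).card = k := by
  have : Finset.univ.filter (fun i : Fin n => (i : ℕ) < k)
      = Finset.map (Fin.castLEEmb hk) Finset.univ := by
    ext i
    simp only [mem_filter, mem_univ, true_and, Finset.mem_map, Fin.castLEEmb_apply]
    constructor
    · intro h
      exact ⟨⟨i, h⟩, rfl⟩
    · rintro ⟨j, -, rfl⟩
      simp
  simp [this]

lemma key_lemma {n k : ℕ} (hk : k ≤ n) (w c : Fin n → ℝ)
    (hc0 : ∀ j, 0 ≤ c j) (hc1 : ∀ j, c j ≤ 1) (hcs : ∑ j, c j = k) :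
    kSmallestSum w k ≤ ∑ j, c j * w j := by
  rcases Nat.eq_zero_or_pos k with rfl | hkpos
  · have hz : ∀ j, c j = 0 := by
      intro j
      have := Finset.sum_eq_zero_iff_of_nonneg (fun j _ => hc0 j) |>.mp (by simpa using hcs)
      exact this j (mem_univ j)
    simp [kSmallestSum, hz]
  · set σ := Tuple.sort w with hσ
    have hmono : Monotone (w ∘ σ) := Tuple.monotone_sort w
    set t : ℝ := w (σ ⟨k - 1, by omega⟩) with ht
    set F := Finset.univ.filter (fun i : Fin n => (i : ℕ) < k) with hF
    -- reindex sum over j by σ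
    have hre : ∑ j, c j * w j = ∑ i, c (σ i) * w (σ i) :=
      (Equiv.sum_comp σ (fun j => c j * w j)).symm
    have hre2 : (k : ℝ) = ∑ i, c (σ i) := by
      rw [Equiv.sum_comp σ c]; exact hcs.symm
    -- key pointwise bounds
    have hpt : ∀ i : Fin n,
        (if (i : ℕ) < k then w (σ i) - t else 0) ≤ c (σ i) * (w (σ i) - t) := by
      intro i
      by_cases h : (i : ℕ) < k
      · simp only [if_pos h]
        have hle : w (σ i) ≤ t := hmono (show i ≤ ⟨k - 1, by omega⟩ by
          simp [Fin.le_def]; omega)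
        nlinarith [hc1 (σ i), hc0 (σ i)]
      · simp only [if_neg h]
        have hge : t ≤ w (σ i) := hmono (show (⟨k - 1, by omega⟩ : Fin n) ≤ i by
          simp [Fin.le_def]; omega)
        nlinarith [hc0 (σ i)]
    have hsum : ∑ i : Fin n, (if (i : ℕ) < k then w (σ i) - t else 0)
        ≤ ∑ i, c (σ i) * (w (σ i) - t) := Finset.sum_le_sum fun i _ => hpt i
    have hL : ∑ i : Fin n, (if (i : ℕ) < k then w (σ i) - t else 0)
        = kSmallestSum w k - k * t := by
      rw [← Finset.sum_filter, Finset.sum_sub_distrib]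
      have : ∑ _i ∈ F, t = (k : ℝ) * t := by
        rw [Finset.sum_const, card_filter_lt_fin hk, nsmul_eq_mul]
      rw [this]
      rfl
    have hR : ∑ i, c (σ i) * (w (σ i) - t)
        = (∑ j, c j * w j) - k * t := by
      have h1 : ∑ i, c (σ i) * (w (σ i) - t)
          = ∑ i, (c (σ i) * w (σ i) - c (σ i) * t) := by
        congr 1; ext i; ring
      rw [h1, Finset.sum_sub_distrib, ← Finset.sum_mul, ← hre2, ← hre]
    linarith

theorem doublyStochastic_mulVec_majorized {n : ℕ} (x y : Fin n → ℝ)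
    (E : Matrix (Fin n) (Fin n) ℝ)
    (hE_nonneg : ∀ i j, 0 ≤ E i j)
    (hE_rows : ∀ i, ∑ j, E i j = 1)
    (hE_cols : ∀ j, ∑ i, E i j = 1)
    (hxy : x = E.mulVec y) :
    (∀ k ≤ n, kSmallestSum y k ≤ kSmallestSum x k) ∧
      kSmallestSum x n = kSmallestSum y n := by
  have hsum_eq : ∀ z : Fin n → ℝ, kSmallestSum z n = ∑ i, z i := by
    intro z
    have : Finset.univ.filter (fun i : Fin n => (i : ℕ) < n) = Finset.univ := by
      ext i; simp [i.isLt]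
    rw [kSmallestSum, this]
    exact Equiv.sum_comp (Tuple.sort z) z
  constructor
  · intro k hk
    set σ := Tuple.sort x with hσ
    set F := Finset.univ.filter (fun i : Fin n => (i : ℕ) < k) with hF
    set c : Fin n → ℝ := fun j => ∑ i ∈ F, E (σ i) j with hc
    have hx_expand : kSmallestSum x k = ∑ j, c j * y j := by
      rw [kSmallestSum]
      have : ∀ i, x (σ i) = ∑ j, E (σ i) j * y j := by
        intro i; rw [hxy]; rfl
      simp_rw [← hσ, this]
      rw [Finset.sum_comm]
      congr 1; ext j
      rw [hc, Finset.sum_mul]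
    rw [hx_expand]
    apply key_lemma hk y c
    · intro j; exact Finset.sum_nonneg fun i _ => hE_nonneg _ _
    · intro j
      calc c j ≤ ∑ i, E (σ i) j :=
            Finset.sum_le_sum_of_subset_of_nonneg (Finset.subset_univ F)
              (fun i _ _ => hE_nonneg _ _)
        _ = ∑ i, E i j := Equiv.sum_comp σ (fun i => E i j)
        _ = 1 := hE_cols j
    · rw [hc]
      rw [Finset.sum_comm]
      have : ∀ i ∈ F, ∑ j, E (σ i) j = 1 := fun i _ => hE_rows _
      rw [Finset.sum_congr rfl this, Finset.sum_const, card_filter_lt_fin hk,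
        nsmul_eq_mul, mul_one]
  · rw [hsum_eq, hsum_eq, hxy]
    have : ∑ i, E.mulVec y i = ∑ j, (∑ i, E i j) * y j := by
      simp_rw [Matrix.mulVec, dotProduct]
      rw [Finset.sum_comm]
      congr 1; ext j; rw [Finset.sum_mul]
    rw [this]
    simp [hE_cols]
end

section
/- Let A be a 2n×2n real symmetric positive definite matrix with block form A = [[A11, A12],[A12^T, A22]], and let Δ11, Δ22 be the diagonal vectors of A11, A22. Define M = diag((Δ11^{-1}·Δ22)^{1/4}) ⊕ diag((Δ11·Δ22^{-1})^{1/4}), with all operations entrywise. Then M is symplectic, and moreover Δ_c(MAM) = Δ_s(A), i.e., the entrywise arithmetic mean of the block diagonals of MAM equals the entrywise geometric mean sqrt(Δ11·Δ22) of the block diagonals of A. -/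
open Matrix

lemma posDef_diag_pos {m} [Fintype m] [DecidableEq m] {A : Matrix m m ℝ}
    (h : A.PosDef) (i : m) : 0 < A i i := by
  have hne : (Pi.single i 1 : m → ℝ) ≠ 0 := by
    intro hc
    have : (Pi.single i 1 : m → ℝ) i = 0 := by rw [hc]; rfl
    simp at this
  have := h.dotProduct_mulVec_pos hne
  simpa [dotProduct, mulVec, Pi.single_apply, Finset.sum_ite_eq] using this

theorem scaling_symplectic_and_delta_c_eq_delta_s {n : ℕ}
    (A : Matrix (Fin n ⊕ Fin n) (Fin n ⊕ Fin n) ℝ)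
    (hsymm : A.IsSymm) (hpd : A.PosDef)
    (M : Matrix (Fin n ⊕ Fin n) (Fin n ⊕ Fin n) ℝ)
    (hM : M = fromBlocks
      (diagonal fun i => ((A (Sum.inl i) (Sum.inl i))⁻¹ * A (Sum.inr i) (Sum.inr i)) ^ ((1 : ℝ)/4))
      0 0
      (diagonal fun i => (A (Sum.inl i) (Sum.inl i) * (A (Sum.inr i) (Sum.inr i))⁻¹) ^ ((1 : ℝ)/4))) :
    Mᵀ * (fromBlocks 0 1 (-1) 0 : Matrix (Fin n ⊕ Fin n) (Fin n ⊕ Fin n) ℝ) * M =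
        fromBlocks 0 1 (-1) 0 ∧
      ∀ i : Fin n,
        ((M * A * M) (Sum.inl i) (Sum.inl i) + (M * A * M) (Sum.inr i) (Sum.inr i)) / 2 =
          Real.sqrt (A (Sum.inl i) (Sum.inl i) * A (Sum.inr i) (Sum.inr i)) := by
  set f : Fin n → ℝ := fun i => ((A (Sum.inl i) (Sum.inl i))⁻¹ * A (Sum.inr i) (Sum.inr i)) ^ ((1 : ℝ)/4) with hf
  set g : Fin n → ℝ := fun i => (A (Sum.inl i) (Sum.inl i) * (A (Sum.inr i) (Sum.inr i))⁻¹) ^ ((1 : ℝ)/4) with hg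
  have hMd : M = diagonal (Sum.elim f g) := by rw [hM, ← fromBlocks_diagonal]
  have ha : ∀ i : Fin n, 0 < A (Sum.inl i) (Sum.inl i) := fun i => posDef_diag_pos hpd _
  have hb : ∀ i : Fin n, 0 < A (Sum.inr i) (Sum.inr i) := fun i => posDef_diag_pos hpd _
  have hfg : ∀ i, f i * g i = 1 := by
    intro i
    rw [hf, hg]
    have h1 : (0:ℝ) ≤ (A (Sum.inl i) (Sum.inl i))⁻¹ * A (Sum.inr i) (Sum.inr i) :=
      mul_nonneg (inv_nonneg.mpr (ha i).le) (hb i).le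
    rw [← Real.mul_rpow h1 (mul_nonneg (ha i).le (inv_nonneg.mpr (hb i).le))]
    rw [mul_mul_mul_comm, inv_mul_cancel₀ (ha i).ne', mul_inv_cancel₀ (hb i).ne',
      one_mul, Real.one_rpow]
  constructor
  · rw [hMd]
    ext i j
    rcases i with i | i <;> rcases j with j | j <;>
        simp [diagonal_transpose, mul_diagonal, diagonal_mul, fromBlocks, one_apply] <;>
      rcases eq_or_ne i j with h | h <;>
      simp [h, hfg, mul_comm (g j) (f j)]
  · intro i
    have hl : (M * A * M) (Sum.inl i) (Sum.inl i) =
        f i * A (Sum.inl i) (Sum.inl i) * f i := by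
      rw [hMd]; simp [mul_diagonal, diagonal_mul, mul_comm, mul_assoc, mul_left_comm]
    have hr : (M * A * M) (Sum.inr i) (Sum.inr i) =
        g i * A (Sum.inr i) (Sum.inr i) * g i := by
      rw [hMd]; simp [mul_diagonal, diagonal_mul, mul_comm, mul_assoc, mul_left_comm]
    set a := A (Sum.inl i) (Sum.inl i) with haa
    set b := A (Sum.inr i) (Sum.inr i) with hbb
    have ha' : 0 < a := ha i
    have hb' : 0 < b := hb i
    have hab : (0:ℝ) ≤ a * b := mul_nonneg ha'.le hb'.le
    have hfsq : f i * f i = Real.sqrt (a * b) / a := by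
      rw [hf]
      rw [← Real.rpow_add (mul_pos (inv_pos.mpr ha') hb')]
      norm_num
      rw [← Real.sqrt_eq_rpow]
      rw [show a⁻¹ * b = (a * b) / (a * a) by field_simp]
      rw [Real.sqrt_div hab, Real.sqrt_mul_self ha'.le]
    have hgsq : g i * g i = Real.sqrt (a * b) / b := by
      rw [hg]
      rw [← Real.rpow_add (mul_pos ha' (inv_pos.mpr hb'))]
      norm_num
      rw [← Real.sqrt_eq_rpow]
      rw [show a * b⁻¹ = (a * b) / (b * b) by field_simp]
      rw [Real.sqrt_div hab, Real.sqrt_mul_self hb'.le]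
    have h1 : f i * a * f i = Real.sqrt (a * b) := by
      rw [mul_comm (f i) a, mul_assoc, hfsq]
      field_simp
    have h2 : g i * b * g i = Real.sqrt (a * b) := by
      rw [mul_comm (g i) b, mul_assoc, hgsq]
      field_simp
    rw [hl, hr, h1, h2]
    ring
end

section
/- Let D be an n×n positive diagonal matrix with diagonal vector d, and let N = [[P, -Q],[Q, P]] be a 2n×2n orthosymplectic matrix (so P + iQ is unitary). Set A = N (D⊕D) N^T with blocks [[A11, A12],[A12^T, A22]]. Then the off-diagonal block A12 has zero diagonal, A11 and A22 have equal diagonal vectors, and Δ_h(A) = (P∘P + Q∘Q) d, where Δ_h(A) = sqrt((Δ11² + Δ22² + 2Δ12²)/2) entrywise. -/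
open Matrix

theorem orthosymplectic_congruence_delta_h {n : ℕ} (d : Fin n → ℝ)
    (hd : ∀ j, 0 < d j)
    (P Q : Matrix (Fin n) (Fin n) ℝ)
    (hsymp : (fromBlocks P (-Q) Q P)ᵀ *
        (fromBlocks 0 1 (-1) 0 : Matrix (Fin n ⊕ Fin n) (Fin n ⊕ Fin n) ℝ) *
        fromBlocks P (-Q) Q P = fromBlocks 0 1 (-1) 0)
    (horth : (fromBlocks P (-Q) Q P)ᵀ * fromBlocks P (-Q) Q P = 1)
    (A : Matrix (Fin n ⊕ Fin n) (Fin n ⊕ Fin n) ℝ)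
    (hA : A = fromBlocks P (-Q) Q P *
        fromBlocks (diagonal d) 0 0 (diagonal d) * (fromBlocks P (-Q) Q P)ᵀ) :
    (∀ i, A (Sum.inl i) (Sum.inr i) = 0) ∧
    (∀ i, A (Sum.inl i) (Sum.inl i) = A (Sum.inr i) (Sum.inr i)) ∧
    (∀ i, Real.sqrt ((A (Sum.inl i) (Sum.inl i) ^ 2 + A (Sum.inr i) (Sum.inr i) ^ 2 +
        2 * A (Sum.inl i) (Sum.inr i) ^ 2) / 2) =
      ∑ j, (P i j * P i j + Q i j * Q i j) * d j) := by
  subst hA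
  have h12 : ∀ i, (fromBlocks P (-Q) Q P *
        fromBlocks (diagonal d) 0 0 (diagonal d) * (fromBlocks P (-Q) Q P)ᵀ)
        (Sum.inl i) (Sum.inr i) = 0 := by
    intro i
    simp [Matrix.fromBlocks_multiply, Matrix.fromBlocks_transpose,
      Matrix.mul_apply, Matrix.diagonal_apply, Finset.mul_sum, Finset.sum_mul]
    rw [← sub_eq_add_neg, sub_eq_zero]
    exact Finset.sum_congr rfl fun j _ => by ring
  have h11 : ∀ i, (fromBlocks P (-Q) Q P *
        fromBlocks (diagonal d) 0 0 (diagonal d) * (fromBlocks P (-Q) Q P)ᵀ)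
        (Sum.inl i) (Sum.inl i) = ∑ j, (P i j * P i j + Q i j * Q i j) * d j := by
    intro i
    simp [Matrix.fromBlocks_multiply, Matrix.fromBlocks_transpose,
      Matrix.mul_apply, Matrix.diagonal_apply, ← Finset.sum_add_distrib]
    congr 1; ext j; ring
  have h22 : ∀ i, (fromBlocks P (-Q) Q P *
        fromBlocks (diagonal d) 0 0 (diagonal d) * (fromBlocks P (-Q) Q P)ᵀ)
        (Sum.inr i) (Sum.inr i) = ∑ j, (P i j * P i j + Q i j * Q i j) * d j := by
    intro i
    simp [Matrix.fromBlocks_multiply, Matrix.fromBlocks_transpose,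
      Matrix.mul_apply, Matrix.diagonal_apply, ← Finset.sum_add_distrib]
    congr 1; ext j; ring
  refine ⟨h12, fun i => by rw [h11, h22], fun i => ?_⟩
  rw [h11, h22, h12]
  have hnn : 0 ≤ ∑ j, (P i j * P i j + Q i j * Q i j) * d j :=
    Finset.sum_nonneg fun j _ => mul_nonneg (add_nonneg (mul_self_nonneg _) (mul_self_nonneg _)) (hd j).le
  rw [show ((∑ j, (P i j * P i j + Q i j * Q i j) * d j) ^ 2 +
      (∑ j, (P i j * P i j + Q i j * Q i j) * d j) ^ 2 + 2 * (0:ℝ) ^ 2) / 2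
      = (∑ j, (P i j * P i j + Q i j * Q i j) * d j) ^ 2 by ring]
  exact Real.sqrt_sq hnn
end

section
/- Let D be an n×n positive diagonal matrix with diagonal vector d, and N = [[P, -Q],[Q, P]] an orthosymplectic 2n×2n matrix. Let A = N (D⊕D) N^T. Then Δ_h(A) is majorized by d, i.e., Δ_h(A) = E d for the doubly stochastic matrix E = P∘P + Q∘Q, and consequently Σ_{i=1}^k (Δ_h(A))↑_i ≥ Σ_{i=1}^k d↑_i for all k, with equality at k = n. -/
open Matrix Finset

lemma card_filter_lt_aux (n k : ℕ) (hk : k ≤ n) :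
    (univ.filter (fun i : Fin n => (i:ℕ) < k)).card = k := by
  have : (univ.filter (fun i : Fin n => (i:ℕ) < k)) = Finset.map (Fin.castLEEmb hk) univ := by
    ext i
    simp [Fin.castLEEmb, Fin.ext_iff]
    constructor
    · intro h; exact ⟨⟨i, h⟩, rfl⟩
    · rintro ⟨a, ha⟩; omega
  rw [this]; simp

lemma kSmallestSum_eq_sum_image {n : ℕ} (x : Fin n → ℝ) (k : ℕ) :
    kSmallestSum x k =
      ∑ j ∈ (univ.filter (fun i : Fin n => (i:ℕ) < k)).image (Tuple.sort x), x j := by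
  rw [Finset.sum_image (fun a _ b _ h => (Tuple.sort x).injective h)]
  rfl

lemma kSmallest_le_weighted {n : ℕ} (d : Fin n → ℝ) (k : ℕ) (hk : k ≤ n)
    (c : Fin n → ℝ) (hc0 : ∀ j, 0 ≤ c j) (hc1 : ∀ j, c j ≤ 1)
    (hcs : ∑ j, c j = k) : kSmallestSum d k ≤ ∑ j, c j * d j := by
  rcases Nat.eq_zero_or_pos k with hk0 | hk0
  · subst hk0
    have hc : ∀ j ∈ (univ : Finset (Fin n)), c j = 0 :=
      (Finset.sum_eq_zero_iff_of_nonneg (fun j _ => hc0 j)).mp (by simpa using hcs)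
    have : kSmallestSum d 0 = 0 := by simp [kSmallestSum]
    rw [this]
    rw [Finset.sum_eq_zero (fun j hj => by rw [hc j hj, zero_mul])]
  · set σ := Tuple.sort d with hσ
    set F := univ.filter (fun i : Fin n => (i:ℕ) < k) with hF
    set S := F.image σ with hS
    have hcardF : F.card = k := card_filter_lt_aux n k hk
    have hcardS : S.card = k := by
      rw [hS, Finset.card_image_of_injective _ σ.injective, hcardF]
    have hk1 : k - 1 < n := by omega
    set t := d (σ ⟨k - 1, hk1⟩) with ht
    have hmono : Monotone (d ∘ σ) := Tuple.monotone_sort d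
    have hin : ∀ j ∈ S, d j ≤ t := by
      intro j hj
      rw [hS, Finset.mem_image] at hj
      obtain ⟨i, hi, rfl⟩ := hj
      rw [hF, Finset.mem_filter] at hi
      exact hmono (show i ≤ ⟨k-1, hk1⟩ from by
        rw [Fin.le_def]; simp; omega)
    have hout : ∀ j ∉ S, t ≤ d j := by
      intro j hj
      have h1 : σ (σ.symm j) = j := σ.apply_symm_apply j
      have h2 : ¬ ((σ.symm j : ℕ) < k) := by
        intro h
        exact hj (by rw [hS, Finset.mem_image]; exact ⟨σ.symm j, by simp [hF, h], h1⟩)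
      calc t ≤ d (σ (σ.symm j)) := hmono (show (⟨k-1, hk1⟩ : Fin n) ≤ σ.symm j from by
              rw [Fin.le_def]; simp; omega)
        _ = d j := by rw [h1]
    set ind : Fin n → ℝ := fun j => if j ∈ S then 1 else 0 with hind
    have hsumind : ∑ j, ind j = k := by
      rw [hind]; simp [hcardS]
    have hsumind_d : ∑ j, ind j * d j = ∑ j ∈ S, d j := by
      rw [hind]
      simp only [ite_mul, one_mul, zero_mul]
      rw [Finset.sum_ite_mem, Finset.univ_inter]
    have hterm : ∀ j, 0 ≤ (c j - ind j) * (d j - t) := by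
      intro j
      by_cases h : j ∈ S
      · have : ind j = 1 := by simp [hind, h]
        rw [this]
        nlinarith [hc1 j, hin j h]
      · have : ind j = 0 := by simp [hind, h]
        rw [this]
        exact mul_nonneg (by linarith [hc0 j]) (by linarith [hout j h])
    have hpos : 0 ≤ ∑ j, (c j - ind j) * (d j - t) :=
      Finset.sum_nonneg (fun j _ => hterm j)
    have hexp : ∑ j, (c j - ind j) * (d j - t)
        = (∑ j, c j * d j) - (∑ j, ind j * d j) - t * ((∑ j, c j) - ∑ j, ind j) := by
      calc ∑ j, (c j - ind j) * (d j - t)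
          = ∑ j, (c j * d j - ind j * d j - (t * c j - t * ind j)) :=
            Finset.sum_congr rfl (fun j _ => by ring)
        _ = _ := by
            rw [Finset.sum_sub_distrib, Finset.sum_sub_distrib, Finset.sum_sub_distrib,
              ← Finset.mul_sum, ← Finset.mul_sum, ← mul_sub]
    rw [hsumind, hcs, sub_self, mul_zero, sub_zero] at hexp
    rw [kSmallestSum_eq_sum_image]
    rw [← hF, ← hσ, ← hS, ← hsumind_d]
    linarith [hexp ▸ hpos]

lemma kSmallestSum_top {n : ℕ} (x : Fin n → ℝ) : kSmallestSum x n = ∑ i, x i := by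
  unfold kSmallestSum
  rw [Finset.filter_true_of_mem (fun i _ => i.isLt)]
  exact Equiv.sum_comp (Tuple.sort x) x

theorem delta_h_majorized_by_symplectic_eigenvalues {n : ℕ} (d : Fin n → ℝ)
    (hd : ∀ j, 0 < d j)
    (P Q : Matrix (Fin n) (Fin n) ℝ)
    (hsymp : (fromBlocks P (-Q) Q P)ᵀ *
        (fromBlocks 0 1 (-1) 0 : Matrix (Fin n ⊕ Fin n) (Fin n ⊕ Fin n) ℝ) *
        fromBlocks P (-Q) Q P = fromBlocks 0 1 (-1) 0)
    (horth : (fromBlocks P (-Q) Q P)ᵀ * fromBlocks P (-Q) Q P = 1)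
    (A : Matrix (Fin n ⊕ Fin n) (Fin n ⊕ Fin n) ℝ)
    (hA : A = fromBlocks P (-Q) Q P *
        fromBlocks (diagonal d) 0 0 (diagonal d) * (fromBlocks P (-Q) Q P)ᵀ)
    (Δh : Fin n → ℝ)
    (hΔh : Δh = fun i => Real.sqrt ((A (Sum.inl i) (Sum.inl i) ^ 2 +
        A (Sum.inr i) (Sum.inr i) ^ 2 + 2 * A (Sum.inl i) (Sum.inr i) ^ 2) / 2))
    (E : Matrix (Fin n) (Fin n) ℝ)
    (hE : E = fun i j => P i j * P i j + Q i j * Q i j) :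
    Δh = E.mulVec d ∧
    ((∀ i j, 0 ≤ E i j) ∧ (∀ i, ∑ j, E i j = 1) ∧ (∀ j, ∑ i, E i j = 1)) ∧
    (∀ k ≤ n, kSmallestSum d k ≤ kSmallestSum Δh k) ∧
    kSmallestSum Δh n = kSmallestSum d n := by
  rw [Matrix.fromBlocks_transpose, Matrix.fromBlocks_multiply, Matrix.fromBlocks_multiply] at hA
  simp only [Matrix.mul_zero, Matrix.zero_mul, add_zero, zero_add, Matrix.neg_mul,
    Matrix.mul_neg, Matrix.transpose_neg, neg_neg] at hA
  have hNNt : fromBlocks P (-Q) Q P * (fromBlocks P (-Q) Q P)ᵀ = 1 :=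
    mul_eq_one_comm.mp horth
  have hAd1 : ∀ i, A (Sum.inl i) (Sum.inl i) = ∑ j, (P i j * P i j + Q i j * Q i j) * d j := by
    intro i
    rw [hA]
    simp [Matrix.fromBlocks_apply₁₁, Matrix.add_apply, Matrix.mul_apply,
      Matrix.diagonal_apply, mul_ite, ite_mul, mul_zero, zero_mul,
      Finset.sum_ite_eq, Finset.sum_ite_eq', Matrix.transpose_apply, ← Finset.sum_add_distrib]
    exact Finset.sum_congr rfl (fun j _ => by ring)
  have hAd2 : ∀ i, A (Sum.inr i) (Sum.inr i) = ∑ j, (P i j * P i j + Q i j * Q i j) * d j := by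
    intro i
    rw [hA]
    simp [Matrix.fromBlocks_apply₂₂, Matrix.add_apply, Matrix.mul_apply,
      Matrix.diagonal_apply, mul_ite, ite_mul, mul_zero, zero_mul,
      Finset.sum_ite_eq, Finset.sum_ite_eq', Matrix.transpose_apply, ← Finset.sum_add_distrib]
    exact Finset.sum_congr rfl (fun j _ => by ring)
  have hAoff : ∀ i, A (Sum.inl i) (Sum.inr i) = 0 := by
    intro i
    rw [hA]
    simp [Matrix.fromBlocks_apply₁₂, Matrix.sub_apply, Matrix.add_apply, Matrix.mul_apply,
      Matrix.diagonal_apply, mul_ite, ite_mul, mul_zero, zero_mul,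
      Finset.sum_ite_eq, Finset.sum_ite_eq', Matrix.transpose_apply, Matrix.neg_apply]
    rw [← sub_eq_add_neg, ← Finset.sum_sub_distrib]
    exact Finset.sum_eq_zero (fun j _ => by ring)
  have hrow : ∀ i, ∑ j, (P i j * P i j + Q i j * Q i j) = 1 := by
    intro i
    have := congrFun (congrFun hNNt (Sum.inl i)) (Sum.inl i)
    simp [Matrix.mul_apply, Fintype.sum_sum_type, Matrix.fromBlocks_apply₁₁,
      Matrix.fromBlocks_apply₁₂, Matrix.transpose_apply, Matrix.one_apply,
      Matrix.neg_apply] at this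
    rw [Finset.sum_add_distrib]
    convert this using 2
  have hcol : ∀ j, ∑ i, (P i j * P i j + Q i j * Q i j) = 1 := by
    intro j
    have := congrFun (congrFun horth (Sum.inl j)) (Sum.inl j)
    simp [Matrix.mul_apply, Fintype.sum_sum_type, Matrix.fromBlocks_apply₁₁,
      Matrix.fromBlocks_apply₂₁, Matrix.transpose_apply, Matrix.one_apply] at this
    rw [Finset.sum_add_distrib]
    convert this using 2
  have hEnn : ∀ i j, 0 ≤ E i j := by
    intro i j; rw [hE]; exact add_nonneg (mul_self_nonneg _) (mul_self_nonneg _)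
  have hmv : ∀ i, E.mulVec d i = ∑ j, E i j * d j := by
    intro i; simp [Matrix.mulVec, dotProduct]
  have hEd : Δh = E.mulVec d := by
    funext i
    have hs : 0 ≤ ∑ j, (P i j * P i j + Q i j * Q i j) * d j :=
      Finset.sum_nonneg (fun j _ => mul_nonneg (add_nonneg (mul_self_nonneg _) (mul_self_nonneg _)) (hd j).le)
    rw [hΔh]
    show Real.sqrt _ = _
    rw [hAd1 i, hAd2 i, hAoff i, hmv i]
    have hexp : ((∑ j, (P i j * P i j + Q i j * Q i j) * d j) ^ 2 +
        (∑ j, (P i j * P i j + Q i j * Q i j) * d j) ^ 2 + 2 * (0:ℝ) ^ 2) / 2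
        = (∑ j, (P i j * P i j + Q i j * Q i j) * d j) ^ 2 := by ring
    rw [hexp, Real.sqrt_sq hs, hE]
  have hErow : ∀ i, ∑ j, E i j = 1 := by intro i; rw [hE]; exact hrow i
  have hEcol : ∀ j, ∑ i, E i j = 1 := by intro j; rw [hE]; exact hcol j
  refine ⟨hEd, ⟨hEnn, hErow, hEcol⟩, ?_, ?_⟩
  · intro k hk
    set T := (univ.filter (fun i : Fin n => (i:ℕ) < k)).image (Tuple.sort Δh) with hT
    have hcardT : T.card = k := by
      rw [hT, Finset.card_image_of_injective _ (Tuple.sort Δh).injective,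
        card_filter_lt_aux n k hk]
    set c : Fin n → ℝ := fun j => ∑ i ∈ T, E i j with hc
    have h1 : kSmallestSum Δh k = ∑ j, c j * d j := by
      rw [kSmallestSum_eq_sum_image, ← hT]
      calc ∑ i ∈ T, Δh i = ∑ i ∈ T, ∑ j, E i j * d j := by
            exact Finset.sum_congr rfl (fun i _ => by rw [hEd, hmv i])
        _ = ∑ j, (∑ i ∈ T, E i j) * d j := by
            rw [Finset.sum_comm]
            exact Finset.sum_congr rfl (fun j _ => by rw [Finset.sum_mul])
    rw [h1]
    refine kSmallest_le_weighted d k hk c (fun j => Finset.sum_nonneg fun i _ => hEnn i j)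
      (fun j => ?_) ?_
    · calc c j ≤ ∑ i, E i j :=
            Finset.sum_le_sum_of_subset_of_nonneg (Finset.subset_univ T)
              (fun i _ _ => hEnn i j)
        _ = 1 := hEcol j
    · calc ∑ j, c j = ∑ i ∈ T, ∑ j, E i j := Finset.sum_comm
        _ = ∑ i ∈ T, (1:ℝ) := Finset.sum_congr rfl (fun i _ => hErow i)
        _ = k := by rw [Finset.sum_const, hcardT]; simp
  · rw [kSmallestSum_top, kSmallestSum_top]
    calc ∑ i, Δh i = ∑ i, ∑ j, E i j * d j := by
          exact Finset.sum_congr rfl (fun i _ => by rw [hEd, hmv i])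
      _ = ∑ j, (∑ i, E i j) * d j := by
          rw [Finset.sum_comm]
          exact Finset.sum_congr rfl (fun j _ => by rw [Finset.sum_mul])
      _ = ∑ j, d j := Finset.sum_congr rfl (fun j _ => by rw [hEcol j, one_mul])
end

section
/- For positive reals α, γ and real β with αγ - β² > 0, let A = [[α, β],[β, γ]] and let M be as in the explicit formula M = (αγ(αγ-β²))^{-1/4} · diag((γ/α)^{1/4}, (α/γ)^{1/4}) · [[ sqrt(αγ-β²), -β ],[ 0, sqrt(αγ) ]]. Then M^T A M = sqrt(αγ - β²) · I_2; i.e., M diagonalizes A in the sense of Williamson's theorem with symplectic eigenvalue sqrt(det A). -/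
open Matrix

theorem explicit_williamson_two_by_two (α γ β : ℝ) (hα : 0 < α) (hγ : 0 < γ)
    (h : 0 < α * γ - β ^ 2)
    (M : Matrix (Fin 2) (Fin 2) ℝ)
    (hM : M = ((α * γ * (α * γ - β ^ 2)) ^ ((1 : ℝ)/4))⁻¹ •
      (!![(γ / α) ^ ((1 : ℝ)/4), 0; 0, (α / γ) ^ ((1 : ℝ)/4)] *
        !![Real.sqrt (α * γ - β ^ 2), -β; 0, Real.sqrt (α * γ)])) :
    Mᵀ * !![α, β; β, γ] * M = Real.sqrt (α * γ - β ^ 2) • (1 : Matrix (Fin 2) (Fin 2) ℝ) := by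
  set a := (γ / α) ^ ((1 : ℝ)/4) with ha_def
  set b := (α / γ) ^ ((1 : ℝ)/4) with hb_def
  set c := (α * γ * (α * γ - β ^ 2)) ^ ((1 : ℝ)/4) with hc_def
  set s := Real.sqrt (α * γ - β ^ 2) with hs_def
  set t := Real.sqrt (α * γ) with ht_def
  have hαγ : 0 < α * γ := mul_pos hα hγ
  have hs : 0 < s := Real.sqrt_pos.mpr h
  have ht : 0 < t := Real.sqrt_pos.mpr hαγ
  have hs2 : s ^ 2 = α * γ - β ^ 2 := Real.sq_sqrt h.le
  have ht2 : t ^ 2 = α * γ := Real.sq_sqrt hαγ.le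
  have pow4 : ∀ x : ℝ, 0 ≤ x → (x ^ ((1:ℝ)/4)) ^ 4 = x := by
    intro x hx
    rw [← Real.rpow_natCast (x ^ ((1:ℝ)/4)) 4, ← Real.rpow_mul hx]
    norm_num
  have ha4 : a ^ 4 = γ / α := pow4 _ (by positivity)
  have hb4 : b ^ 4 = α / γ := pow4 _ (by positivity)
  have hc4 : c ^ 4 = α * γ * (α * γ - β ^ 2) := pow4 _ (by positivity)
  have ha0 : 0 < a := Real.rpow_pos_of_pos (by positivity) _
  have hb0 : 0 < b := Real.rpow_pos_of_pos (by positivity) _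
  have hc0 : 0 < c := Real.rpow_pos_of_pos (by positivity) _
  have ht4 : t ^ 4 = (α * γ) ^ 2 := by rw [show (4:ℕ) = 2*2 by rfl, pow_mul, ht2]
  have hab : a * b = 1 := by
    rw [← pow_left_inj₀ (by positivity : (0:ℝ) ≤ a * b) zero_le_one (by norm_num : (4:ℕ) ≠ 0)]
    rw [mul_pow, ha4, hb4]; field_simp
  have haα : a * α = b * t := by
    rw [← pow_left_inj₀ (by positivity) (by positivity) (by norm_num : (4:ℕ) ≠ 0)]
    rw [mul_pow, mul_pow, ha4, hb4, ht4]; field_simp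
  have hαa2 : α * a ^ 2 = t := by
    rw [← pow_left_inj₀ (by positivity) ht.le (by norm_num : (2:ℕ) ≠ 0)]
    rw [mul_pow, ← pow_mul, ht2]; field_simp [show (2*2:ℕ) = 4 by rfl, ha4]; rw [ha4]; field_simp
  have hγb2 : γ * b ^ 2 = t := by
    rw [← pow_left_inj₀ (by positivity) ht.le (by norm_num : (2:ℕ) ≠ 0)]
    rw [mul_pow, ← pow_mul, ht2]; field_simp [show (2*2:ℕ) = 4 by rfl, hb4]; rw [hb4]; field_simp
  have hc2 : c ^ 2 = t * s := by
    rw [← pow_left_inj₀ (by positivity) (by positivity) (by norm_num : (2:ℕ) ≠ 0)]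
    rw [← pow_mul, mul_pow, hs2, ht2]
    simpa [show (2*2:ℕ) = 4 by rfl] using hc4
  clear_value a b c s t
  subst hM
  ext i j
  fin_cases i <;> fin_cases j <;>
    simp [Matrix.mul_apply, Fin.sum_univ_two, Matrix.one_apply, Matrix.vecHead,
      Matrix.vecTail] <;>
    field_simp
  · linear_combination s * hαa2 - hc2
  · linear_combination (-(a*s*β)) * haα
  · left; linear_combination (-β) * haα
  · linear_combination
      β^2 * hαa2 + t^2 * hγb2 - 2*t*β^2 * hab - s * hc2
        - t * hs2 + t * ht2
end
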